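/- arXiv:1404.4236 — 3 statements merged into one kernel-verified Lean document; each statement's English description precedes it below -/
import Mathlib

section
/- Let f : ℝ → ℝ be continuous and satisfy the exponential decay estimates with constants C₁, C₂, α, β > 0. Then the Fourier transform F(f) is holomorphic (complex differentiable) on the open strip S = {ω ∈ ℂ : −α < Im ω < β}. -/
/-!
The integrand `exp (i ω t) f t` has modulus `exp (-(Im ω) t) |f t|`. If `Im ω` stays at distance
at least `δ > 0` from both ends of `(-α, β)`, the two decay estimates bound this by
`(C₁ + C₂) exp (-δ |t|)`, and its `ω`-derivative by `(C₁ + C₂) |t| exp (-δ |t|)`; both are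
integrable, so we may differentiate under the integral sign near every point of the strip.
-/

open MeasureTheory Real Set Filter Topology
open Complex (I)
open scoped Complex

theorem integrable_comp_abs_of_integrableOn_Ioi {E : Type*} [NormedAddCommGroup E] {g : ℝ → E}
    (hg : IntegrableOn g (Ioi 0)) : Integrable fun t => g |t| := by
  have hIoi : IntegrableOn (fun t => g |t|) (Ioi 0) :=
    hg.congr_fun (fun t ht => by rw [abs_of_pos ht]) measurableSet_Ioi
  have hIci : IntegrableOn (fun t => g |t|) (Ici (-0)) := by
    rw [neg_zero]; exact Iff.mpr integrableOn_Ici_iff_integrableOn_Ioi hIoi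
  have hIic : IntegrableOn (fun t => g |t|) (Iic 0) := by
    simpa only [abs_neg] using hIci.comp_neg_Iic
  rw [← integrableOn_univ, ← Iic_union_Ioi (a := (0 : ℝ))]
  exact hIic.union hIoi

theorem integrable_exp_neg_mul_abs {c : ℝ} (hc : 0 < c) :
    Integrable fun t : ℝ => rexp (-c * |t|) :=
  integrable_comp_abs_of_integrableOn_Ioi (exp_neg_integrableOn_Ioi 0 hc)

theorem integrable_abs_mul_exp_neg_mul_abs {c : ℝ} (hc : 0 < c) :
    Integrable fun t : ℝ => |t| * rexp (-c * |t|) :=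
  integrable_comp_abs_of_integrableOn_Ioi (g := fun t => t * rexp (-c * t)) <| by
    simpa using integrableOn_rpow_mul_exp_neg_mul_rpow (s := 1) (p := 1) (by norm_num) one_pos hc

theorem norm_cexp_I_mul_mul_ofReal (ω : ℂ) (t : ℝ) :
    ‖cexp (I * ω * t)‖ = rexp (-ω.im * t) := by
  simp [Complex.norm_exp]

theorem exp_mul_abs_le_of_two_sided_decay {f : ℝ → ℝ} {C₁ C₂ α β y δ : ℝ}
    (h₁ : ∀ t, 0 ≤ t → |f t| ≤ C₁ * rexp (-α * t)) (h₂ : ∀ t, t ≤ 0 → |f t| ≤ C₂ * rexp (β * t))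
    (hα : δ ≤ y + α) (hβ : δ ≤ β - y) (t : ℝ) :
    rexp (-y * t) * |f t| ≤ (C₁ + C₂) * rexp (-δ * |t|) := by
  have hC₁ : 0 ≤ C₁ := by simpa using (abs_nonneg _).trans (h₁ 0 le_rfl)
  have hC₂ : 0 ≤ C₂ := by simpa using (abs_nonneg _).trans (h₂ 0 le_rfl)
  rcases le_total 0 t with ht | ht
  · calc rexp (-y * t) * |f t| ≤ rexp (-y * t) * (C₁ * rexp (-α * t)) := by gcongr; exact h₁ t ht
      _ = C₁ * rexp (-(y + α) * t) := by rw [mul_left_comm, ← exp_add]; ring_nf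
      _ ≤ (C₁ + C₂) * rexp (-δ * |t|) := by
        rw [abs_of_nonneg ht]
        exact mul_le_mul (by linarith) (exp_le_exp.2 (by nlinarith)) (exp_pos _).le (by linarith)
  · calc rexp (-y * t) * |f t| ≤ rexp (-y * t) * (C₂ * rexp (β * t)) := by gcongr; exact h₂ t ht
      _ = C₂ * rexp ((β - y) * t) := by rw [mul_left_comm, ← exp_add]; ring_nf
      _ ≤ (C₁ + C₂) * rexp (-δ * |t|) := by
        rw [abs_of_nonpos ht]
        exact mul_le_mul (by linarith) (exp_le_exp.2 (by nlinarith)) (exp_pos _).le (by linarith)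

noncomputable def fourierLaplace (g : ℝ → ℂ) (ω : ℂ) : ℂ :=
  ∫ t : ℝ, cexp (I * ω * t) * g t

theorem hasDerivAt_fourierLaplace {g : ℝ → ℂ} (hg : AEStronglyMeasurable g) {ω₀ : ℂ} {C δ : ℝ}
    (hδ : 0 < δ) (hbound : ∀ᶠ ω in 𝓝 ω₀, ∀ t, rexp (-ω.im * t) * ‖g t‖ ≤ C * rexp (-δ * |t|)) :
    HasDerivAt (fourierLaplace g) (∫ t : ℝ, I * t * cexp (I * ω₀ * t) * g t) ω₀ := by
  have hcont (ω : ℂ) : Continuous fun t : ℝ => cexp (I * ω * t) := by fun_prop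
  have hF_int : Integrable fun t : ℝ => cexp (I * ω₀ * t) * g t := by
    refine ((integrable_exp_neg_mul_abs hδ).const_mul C).mono'
      ((hcont ω₀).aestronglyMeasurable.mul hg) (ae_of_all _ fun t => ?_)
    rw [norm_mul, norm_cexp_I_mul_mul_ofReal]
    exact hbound.self_of_nhds t
  have hF'_bound : ∀ t : ℝ, ∀ ω ∈ {ω : ℂ | ∀ t, rexp (-ω.im * t) * ‖g t‖ ≤ C * rexp (-δ * |t|)},
      ‖I * t * cexp (I * ω * t) * g t‖ ≤ C * (|t| * rexp (-δ * |t|)) := by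
    intro t ω hω
    calc ‖I * t * cexp (I * ω * t) * g t‖ = |t| * (rexp (-ω.im * t) * ‖g t‖) := by
          rw [norm_mul, norm_mul, norm_mul, Complex.norm_I, Complex.norm_real,
            norm_cexp_I_mul_mul_ofReal, Real.norm_eq_abs, one_mul, mul_assoc]
      _ ≤ |t| * (C * rexp (-δ * |t|)) := mul_le_mul_of_nonneg_left (hω t) (abs_nonneg t)
      _ = C * (|t| * rexp (-δ * |t|)) := by ring
  refine (hasDerivAt_integral_of_dominated_loc_of_deriv_le hbound
    (Eventually.of_forall fun ω => (hcont ω).aestronglyMeasurable.mul hg) hF_int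
    ((by fun_prop : Continuous fun t : ℝ => I * t * cexp (I * ω₀ * t)).aestronglyMeasurable.mul hg)
    (ae_of_all _ hF'_bound) ((integrable_abs_mul_exp_neg_mul_abs hδ).const_mul C)
    (ae_of_all _ fun t ω _ => ?_)).2
  simpa [mul_comm, mul_assoc, mul_left_comm] using
    (((hasDerivAt_id ω).const_mul (I * t)).cexp).mul_const (g t)

theorem fourier_bicomplex_holomorphic_on_strip_general
    (f : ℝ → ℝ) (C₁ C₂ α β : ℝ)
    (hf : Continuous f)
    (h₁ : ∀ t : ℝ, 0 ≤ t → |f t| ≤ C₁ * Real.exp (-α * t))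
    (h₂ : ∀ t : ℝ, t ≤ 0 → |f t| ≤ C₂ * Real.exp (β * t)) :
    DifferentiableOn ℂ
      (fun ω : ℂ => ∫ t : ℝ, Complex.exp (Complex.I * ω * t) * (f t : ℂ))
      {ω : ℂ | -α < ω.im ∧ ω.im < β} := by
  rintro ω₀ ⟨hω₀α, hω₀β⟩
  obtain ⟨δ, hδ, hδm⟩ := exists_between (lt_min (by linarith) (by linarith) :
    0 < min (ω₀.im + α) (β - ω₀.im))
  obtain ⟨hδα, hδβ⟩ := lt_min_iff.1 hδm
  have hnear : ∀ᶠ ω in 𝓝 ω₀, ω.im ∈ Ioo (-α + δ) (β - δ) :=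
    Complex.continuous_im.continuousAt.eventually (Ioo_mem_nhds (by linarith) (by linarith))
  have hbound : ∀ᶠ ω in 𝓝 ω₀, ∀ t : ℝ,
      rexp (-ω.im * t) * ‖(f t : ℂ)‖ ≤ (C₁ + C₂) * rexp (-δ * |t|) := by
    filter_upwards [hnear] with ω ⟨hωα, hωβ⟩ t
    simpa only [Complex.norm_real, Real.norm_eq_abs] using
      exp_mul_abs_le_of_two_sided_decay h₁ h₂ (by linarith) (by linarith) t
  exact (hasDerivAt_fourierLaplace (Complex.continuous_ofReal.comp hf).aestronglyMeasurable
    hδ hbound).differentiableAt.differentiableWithinAt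

theorem fourier_bicomplex_holomorphic_on_strip
    (f : ℝ → ℝ) (C₁ C₂ α β : ℝ)
    (hC₁ : 0 < C₁) (hC₂ : 0 < C₂) (hα : 0 < α) (hβ : 0 < β)
    (hf : Continuous f)
    (h₁ : ∀ t : ℝ, 0 ≤ t → |f t| ≤ C₁ * Real.exp (-α * t))
    (h₂ : ∀ t : ℝ, t ≤ 0 → |f t| ≤ C₂ * Real.exp (β * t)) :
    DifferentiableOn ℂ
      (fun ω : ℂ => ∫ t : ℝ, Complex.exp (Complex.I * ω * t) * (f t : ℂ))
      {ω : ℂ | -α < ω.im ∧ ω.im < β} :=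
  fourier_bicomplex_holomorphic_on_strip_general f C₁ C₂ α β hf h₁ h₂
end

section
/- Let f, g : ℝ → ℝ be continuous functions each satisfying the exponential decay estimates with constants C₁, C₂, α, β > 0. If F(f)(ω) = F(g)(ω) for all ω ∈ ℂ in the strip S = {ω ∈ ℂ : −α < Im ω < β}, then f(t) = g(t) for all t ∈ ℝ. -/
open MeasureTheory Real FourierTransform

/-! Both functions are integrable thanks to the two-sided exponential decay, and the strip
contains the real axis, where the given transform is the Fourier transform `𝓕` evaluated at
`-ω / 2π`. So `f - g` is continuous, integrable and has vanishing Fourier transform, and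
Fourier inversion forces `f - g = 0`. -/

theorem integrable_of_norm_le_exp_decay {E : Type*} [NormedAddCommGroup E] {f : ℝ → E}
    {C₁ C₂ α β : ℝ} (hα : 0 < α) (hβ : 0 < β) (hf : AEStronglyMeasurable f)
    (hf₁ : ∀ t : ℝ, 0 ≤ t → ‖f t‖ ≤ C₁ * Real.exp (-α * t))
    (hf₂ : ∀ t : ℝ, t ≤ 0 → ‖f t‖ ≤ C₂ * Real.exp (β * t)) :
    Integrable f := by
  rw [← integrableOn_univ, ← Set.Iic_union_Ioi (a := (0 : ℝ)), integrableOn_union]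
  constructor
  · refine ((integrableOn_exp_mul_Iic hβ 0).const_mul C₂).mono' hf.restrict ?_
    exact (ae_restrict_iff' measurableSet_Iic).2 (.of_forall hf₂)
  · refine ((integrableOn_exp_mul_Ioi (neg_lt_zero.2 hα) 0).const_mul C₁).mono' hf.restrict ?_
    exact (ae_restrict_iff' measurableSet_Ioi).2 (.of_forall fun t ht => hf₁ t ht.le)

section FourierInjective

variable {V E : Type*} [NormedAddCommGroup V] [InnerProductSpace ℝ V]
  [MeasurableSpace V] [BorelSpace V] [FiniteDimensional ℝ V]
  [NormedAddCommGroup E] [NormedSpace ℂ E]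

theorem Real.fourier_sub {f g : V → E} (hf : Integrable f) (hg : Integrable g) :
    𝓕 (f - g) = 𝓕 f - 𝓕 g := by
  ext w
  simp only [Real.fourier_eq, Pi.sub_apply, smul_sub]
  exact integral_sub ((Real.fourierIntegral_convergent_iff w).2 hf)
    ((Real.fourierIntegral_convergent_iff w).2 hg)

theorem Continuous.eq_of_fourier_eq [CompleteSpace E] {f g : V → E} (hf : Continuous f) (hg : Continuous g)
    (hf_int : Integrable f) (hg_int : Integrable g) (h : 𝓕 f = 𝓕 g) : f = g := by
  have hsub : 𝓕 (f - g) = 0 := by rw [Real.fourier_sub hf_int hg_int, h, sub_self]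
  have hinv := (hf.sub hg).fourierInv_fourier_eq (hf_int.sub hg_int)
    (by rw [hsub]; exact integrable_zero _ _ _)
  have hinv_zero : 𝓕⁻ (0 : V → E) = 0 := by ext w; simp [Real.fourierInv_eq]
  rw [hsub, hinv_zero] at hinv
  exact sub_eq_zero.1 hinv.symm

end FourierInjective

theorem Real.fourier_eq_integral_exp_I_mul (f : ℝ → ℂ) (w : ℝ) :
    𝓕 f w = ∫ t : ℝ, Complex.exp (Complex.I * ((-(2 * π * w) : ℝ) : ℂ) * t) * f t := by
  rw [Real.fourier_real_eq_integral_exp_smul]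
  congr 1 with t
  rw [smul_eq_mul]
  push_cast
  ring_nf

theorem fourier_bicomplex_uniqueness_general
    (f g : ℝ → ℝ) (C₁ C₂ α β : ℝ)
    (hα : 0 < α) (hβ : 0 < β)
    (hf : Continuous f) (hg : Continuous g)
    (hf₁ : ∀ t : ℝ, 0 ≤ t → |f t| ≤ C₁ * Real.exp (-α * t))
    (hf₂ : ∀ t : ℝ, t ≤ 0 → |f t| ≤ C₂ * Real.exp (β * t))
    (hg₁ : ∀ t : ℝ, 0 ≤ t → |g t| ≤ C₁ * Real.exp (-α * t))
    (hg₂ : ∀ t : ℝ, t ≤ 0 → |g t| ≤ C₂ * Real.exp (β * t))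
    (heq : ∀ ω : ℂ, -α < ω.im → ω.im < β →
      (∫ t : ℝ, Complex.exp (Complex.I * ω * t) * (f t : ℂ)) =
      (∫ t : ℝ, Complex.exp (Complex.I * ω * t) * (g t : ℂ))) :
    ∀ t : ℝ, f t = g t := by
  have hf_int := (integrable_of_norm_le_exp_decay hα hβ hf.aestronglyMeasurable hf₁ hf₂).ofReal (𝕜 := ℂ)
  have hg_int := (integrable_of_norm_le_exp_decay hα hβ hg.aestronglyMeasurable hg₁ hg₂).ofReal (𝕜 := ℂ)
  have hfourier : 𝓕 (fun t => (f t : ℂ)) = 𝓕 (fun t => (g t : ℂ)) := by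
    ext w
    simp only [Real.fourier_eq_integral_exp_I_mul]
    exact heq _ (by simpa using hα) (by simpa using hβ)
  have hfg := (Complex.continuous_ofReal.comp hf).eq_of_fourier_eq
    (Complex.continuous_ofReal.comp hg) hf_int hg_int hfourier
  exact fun t => Complex.ofReal_injective (congrFun hfg t)

theorem fourier_bicomplex_uniqueness
    (f g : ℝ → ℝ) (C₁ C₂ α β : ℝ)
    (hC₁ : 0 < C₁) (hC₂ : 0 < C₂) (hα : 0 < α) (hβ : 0 < β)
    (hf : Continuous f) (hg : Continuous g)
    (hf₁ : ∀ t : ℝ, 0 ≤ t → |f t| ≤ C₁ * Real.exp (-α * t))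
    (hf₂ : ∀ t : ℝ, t ≤ 0 → |f t| ≤ C₂ * Real.exp (β * t))
    (hg₁ : ∀ t : ℝ, 0 ≤ t → |g t| ≤ C₁ * Real.exp (-α * t))
    (hg₂ : ∀ t : ℝ, t ≤ 0 → |g t| ≤ C₂ * Real.exp (β * t))
    (heq : ∀ ω : ℂ, -α < ω.im → ω.im < β →
      (∫ t : ℝ, Complex.exp (Complex.I * ω * t) * (f t : ℂ)) =
      (∫ t : ℝ, Complex.exp (Complex.I * ω * t) * (g t : ℂ))) :
    ∀ t : ℝ, f t = g t :=
  fourier_bicomplex_uniqueness_general f g C₁ C₂ α β hα hβ hf hg hf₁ hf₂ hg₁ hg₂ heq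
end

section
/- Let f, g : ℝ → ℝ be continuous functions each satisfying the exponential decay estimates with constants C₁, C₂, α, β > 0. Define the convolution (f * g)(t) = ∫_{−∞}^{∞} f(u)·g(t − u) du. Then for every ω ∈ ℂ with −α < Im ω < β, F(f * g)(ω) = F(f)(ω)·F(g)(ω). -/
/-!
Multiplying by `exp (i ω t)` turns the convolution of `f` and `g` into the convolution of the
damped functions `exp (i ω t) f t` and `exp (i ω t) g t`, since `exp (i ω t)` factors as
`exp (i ω u) exp (i ω (t - u))`. For `-α < Im ω < β` these damped functions still decay
exponentially on both sides, hence are integrable, and the integral of a convolution of integrable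
functions is the product of their integrals.
-/

open MeasureTheory Real

open Complex in
theorem Complex.norm_exp_I_mul_mul_ofReal (ω : ℂ) (t : ℝ) :
    ‖cexp (I * ω * t)‖ = Real.exp (-ω.im * t) := by
  rw [norm_exp]
  congr 1
  simp [mul_re, mul_im]

section TwoSidedExpDecay

variable {E : Type*} [NormedAddCommGroup E]

def HasTwoSidedExpDecay (h : ℝ → E) (C D a b : ℝ) : Prop :=
  (∀ t : ℝ, 0 ≤ t → ‖h t‖ ≤ C * Real.exp (-a * t)) ∧
    ∀ t : ℝ, t ≤ 0 → ‖h t‖ ≤ D * Real.exp (b * t)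

namespace HasTwoSidedExpDecay

variable {h : ℝ → E} {C D a b : ℝ}

theorem integrable (hh : HasTwoSidedExpDecay h C D a b) (hm : AEStronglyMeasurable h)
    (ha : 0 < a) (hb : 0 < b) : Integrable h := by
  rw [← integrableOn_univ, ← Set.Iic_union_Ioi (a := (0 : ℝ))]
  refine IntegrableOn.union ?_ ?_
  · refine Integrable.mono' ((integrableOn_exp_mul_Iic hb 0).const_mul D) hm.restrict ?_
    exact ae_restrict_of_forall_mem measurableSet_Iic fun t ht => hh.2 t ht
  · have hdecay := (integrableOn_exp_mul_Ioi (neg_lt_zero.2 ha) 0).const_mul C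
    refine Integrable.mono' hdecay hm.restrict ?_
    exact ae_restrict_of_forall_mem measurableSet_Ioi fun t ht => hh.1 t (le_of_lt ht)

theorem ofReal {φ : ℝ → ℝ} (hφ : HasTwoSidedExpDecay φ C D a b) :
    HasTwoSidedExpDecay (fun t => (φ t : ℂ)) C D a b := by
  simpa only [HasTwoSidedExpDecay, Complex.norm_real] using hφ

theorem cexp_mul {φ : ℝ → ℂ} (hφ : HasTwoSidedExpDecay φ C D a b) (ω : ℂ) :
    HasTwoSidedExpDecay (fun t => Complex.exp (Complex.I * ω * t) * φ t)
      C D (a + ω.im) (b - ω.im) := by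
  constructor
  · intro t ht
    calc ‖Complex.exp (Complex.I * ω * t) * φ t‖
        ≤ Real.exp (-ω.im * t) * (C * Real.exp (-a * t)) := by
          rw [norm_mul, Complex.norm_exp_I_mul_mul_ofReal]
          gcongr
          exact hφ.1 t ht
      _ = C * Real.exp (-(a + ω.im) * t) := by
          rw [mul_left_comm, ← Real.exp_add]; ring_nf
  · intro t ht
    calc ‖Complex.exp (Complex.I * ω * t) * φ t‖
        ≤ Real.exp (-ω.im * t) * (D * Real.exp (b * t)) := by
          rw [norm_mul, Complex.norm_exp_I_mul_mul_ofReal]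
          gcongr
          exact hφ.2 t ht
      _ = D * Real.exp ((b - ω.im) * t) := by
          rw [mul_left_comm, ← Real.exp_add]; ring_nf

end HasTwoSidedExpDecay

end TwoSidedExpDecay

theorem cexp_mul_integral_mul_sub (f g : ℝ → ℝ) (ω : ℂ) (t : ℝ) :
    Complex.exp (Complex.I * ω * t) * ((∫ u : ℝ, f u * g (t - u) : ℝ) : ℂ) =
      convolution (fun t : ℝ => Complex.exp (Complex.I * ω * t) * (f t : ℂ))
        (fun t : ℝ => Complex.exp (Complex.I * ω * t) * (g t : ℂ))
        (ContinuousLinearMap.mul ℝ ℂ) volume t := by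
  rw [convolution_def, ← integral_complex_ofReal, ← integral_const_mul]
  congr 1 with u
  have hsplit : Complex.exp (Complex.I * ω * t) =
      Complex.exp (Complex.I * ω * u) * Complex.exp (Complex.I * ω * (t - u : ℝ)) := by
    rw [← Complex.exp_add]; push_cast; ring_nf
  rw [hsplit, ContinuousLinearMap.mul_apply', Complex.ofReal_mul]
  ring

theorem fourier_bicomplex_convolution_general
    (f g : ℝ → ℝ) (C₁ C₂ α β : ℝ)
    (hf : Continuous f) (hg : Continuous g)
    (hf₁ : ∀ t : ℝ, 0 ≤ t → |f t| ≤ C₁ * Real.exp (-α * t))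
    (hf₂ : ∀ t : ℝ, t ≤ 0 → |f t| ≤ C₂ * Real.exp (β * t))
    (hg₁ : ∀ t : ℝ, 0 ≤ t → |g t| ≤ C₁ * Real.exp (-α * t))
    (hg₂ : ∀ t : ℝ, t ≤ 0 → |g t| ≤ C₂ * Real.exp (β * t))
    (ω : ℂ) (hω₁ : -α < ω.im) (hω₂ : ω.im < β) :
    (∫ t : ℝ, Complex.exp (Complex.I * ω * t) *
        ((∫ u : ℝ, f u * g (t - u) : ℝ) : ℂ)) =
      (∫ t : ℝ, Complex.exp (Complex.I * ω * t) * (f t : ℂ)) *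
      (∫ t : ℝ, Complex.exp (Complex.I * ω * t) * (g t : ℂ)) := by
  have hF : Integrable fun t : ℝ => Complex.exp (Complex.I * ω * t) * (f t : ℂ) :=
    ((HasTwoSidedExpDecay.ofReal ⟨hf₁, hf₂⟩).cexp_mul ω).integrable
      (by fun_prop) (by linarith) (by linarith)
  have hG : Integrable fun t : ℝ => Complex.exp (Complex.I * ω * t) * (g t : ℂ) :=
    ((HasTwoSidedExpDecay.ofReal ⟨hg₁, hg₂⟩).cexp_mul ω).integrable
      (by fun_prop) (by linarith) (by linarith)
  simp_rw [cexp_mul_integral_mul_sub f g ω]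
  exact integral_convolution (ContinuousLinearMap.mul ℝ ℂ) hF hG

theorem fourier_bicomplex_convolution
    (f g : ℝ → ℝ) (C₁ C₂ α β : ℝ)
    (hC₁ : 0 < C₁) (hC₂ : 0 < C₂) (hα : 0 < α) (hβ : 0 < β)
    (hf : Continuous f) (hg : Continuous g)
    (hf₁ : ∀ t : ℝ, 0 ≤ t → |f t| ≤ C₁ * Real.exp (-α * t))
    (hf₂ : ∀ t : ℝ, t ≤ 0 → |f t| ≤ C₂ * Real.exp (β * t))
    (hg₁ : ∀ t : ℝ, 0 ≤ t → |g t| ≤ C₁ * Real.exp (-α * t))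
    (hg₂ : ∀ t : ℝ, t ≤ 0 → |g t| ≤ C₂ * Real.exp (β * t))
    (ω : ℂ) (hω₁ : -α < ω.im) (hω₂ : ω.im < β) :
    (∫ t : ℝ, Complex.exp (Complex.I * ω * t) *
        ((∫ u : ℝ, f u * g (t - u) : ℝ) : ℂ)) =
      (∫ t : ℝ, Complex.exp (Complex.I * ω * t) * (f t : ℂ)) *
      (∫ t : ℝ, Complex.exp (Complex.I * ω * t) * (g t : ℂ)) :=
  fourier_bicomplex_convolution_general f g C₁ C₂ α β hf hg hf₁ hf₂ hg₁ hg₂ ω hω₁ hω₂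
end
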